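/- Let s = {r_n}_{n∈ℤ} be a lacunary sequence of positive reals (r_{n+1}/r_n ≥ c for some fixed c > 1 and all n ∈ ℤ). For each d ≥ 1 let Q_d = (−1/2,1/2)^d be the open unit cube in ℝ^d, and let c_{s,d} denote the best constant in the weak type (1,1) inequality for the lacunary maximal operator M_{s,d,Q_d}. Then c_{s,d} ≤ c_{s,d+1} for every d ≥ 1. -/

import Mathlib

open MeasureTheory Set
open scoped ENNReal

/-- The open unit cube `Q_d = (-1/2, 1/2)^d` in `ℝ^d`. -/
def unitCube (d : ℕ) : Set (Fin d → ℝ) :=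
  Set.univ.pi fun _ : Fin d => Set.Ioo (-(1/2) : ℝ) (1/2)

/-- The lacunary maximal operator on `ℝ^d` associated to a sequence `s : ℤ → ℝ` of radii and
a "ball" `B`: `M_{s,d,B} f (x) = sup_{n ∈ ℤ} (1/(s n ^ d · λ^d(B))) ∫_{x + s n • B} |f|`. -/
noncomputable def lacMaxOp (d : ℕ) (s : ℤ → ℝ) (B : Set (Fin d → ℝ))
    (f : (Fin d → ℝ) → ℝ) (x : Fin d → ℝ) : ℝ≥0∞ :=
  ⨆ n : ℤ,
    (∫⁻ y in (fun b => x + s n • b) '' B, ENNReal.ofReal |f y| ∂volume) /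
      (ENNReal.ofReal (s n ^ d) * volume B)

/-- The best constant in the weak type `(1,1)` inequality for `lacMaxOp d s B`. -/
noncomputable def lacBestConst (d : ℕ) (s : ℤ → ℝ) (B : Set (Fin d → ℝ)) : ℝ :=
  sInf {c : ℝ | 0 < c ∧ ∀ f : (Fin d → ℝ) → ℝ, Integrable f volume → ∀ α : ℝ, 0 < α →
    ENNReal.ofReal α * volume {x | ENNReal.ofReal α < lacMaxOp d s B f x} ≤
      ENNReal.ofReal (c * ∫ x, |f x|)}

/-!
Both best constants are infima of sets of admissible constants, so it suffices that the set in
dimension `d + 1` is nonempty and contained in the set in dimension `d`.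

Nonemptiness: if `M f (x) > α`, some cube `x + r_n Q` carries an average of `|f|` above `α`, and
`α r_n ^ d < ‖f‖₁` bounds its side. The Vitali covering lemma applied to these cubes (sup-norm
balls of radius `r_n / 2`) gives the constant `4 ^ d`.

Inclusion: for `f` on `ℝ^d`, the function `F (t, x) = L⁻¹ 1_{(0, L)} (t) f (x)` has the same
`L¹` norm, and if `M f (x) > α` with a cube of side `r_n ≤ R`, then `M F (t, x) > α / L` for every
`t ∈ [R / 2, L - R / 2]`. The weak type inequality for `F` thus gives
`(α / L) (L - R) |{M f > α}| ≤ c ‖f‖₁`, and `L → ∞`.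
-/

open Metric Filter Topology

lemma coe_piFinSuccAbove_zero {α : Type*} [MeasurableSpace α] {d : ℕ} :
    ⇑(MeasurableEquiv.piFinSuccAbove (fun _ : Fin (d + 1) => α) 0) =
      fun y => (y 0, Fin.tail y) :=
  funext fun y => by simp

lemma measurableEmbedding_head_tail {α : Type*} [MeasurableSpace α] {d : ℕ} :
    MeasurableEmbedding fun y : Fin (d + 1) → α => (y 0, Fin.tail y) :=
  coe_piFinSuccAbove_zero (α := α) ▸
    (MeasurableEquiv.piFinSuccAbove (fun _ : Fin (d + 1) => α) 0).measurableEmbedding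

section HeadTail

variable {α : Type*} [MeasureSpace α] [SigmaFinite (volume : Measure α)] {d : ℕ}

lemma measurePreserving_head_tail :
    MeasurePreserving (fun y : Fin (d + 1) → α => (y 0, Fin.tail y)) volume
      ((volume : Measure α).prod volume) :=
  coe_piFinSuccAbove_zero (α := α) ▸
    volume_preserving_piFinSuccAbove (fun _ : Fin (d + 1) => α) 0

lemma volume_head_tail_mem (s : Set α) (t : Set (Fin d → α)) :
    volume {y : Fin (d + 1) → α | y 0 ∈ s ∧ Fin.tail y ∈ t} = volume s * volume t := by
  rw [← Measure.prod_prod, ← measurePreserving_head_tail.map_eq,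
    measurableEmbedding_head_tail.map_apply]
  rfl

lemma integrable_mul_head_tail {g : α → ℝ} {f : (Fin d → α) → ℝ} (hg : Integrable g)
    (hf : Integrable f) : Integrable fun y : Fin (d + 1) → α => g (y 0) * f (Fin.tail y) :=
  (measurePreserving_head_tail.integrable_comp_emb measurableEmbedding_head_tail
    (g := fun w => g w.1 * f w.2)).2 (hg.mul_prod hf)

lemma setIntegral_mul_head_tail (g : α → ℝ) (f : (Fin d → α) → ℝ) (s : Set α)
    (t : Set (Fin d → α)) :
    ∫ y in {y : Fin (d + 1) → α | y 0 ∈ s ∧ Fin.tail y ∈ t}, g (y 0) * f (Fin.tail y) =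
      (∫ u in s, g u) * ∫ x in t, f x := by
  rw [← integral_prod_mul, Measure.prod_restrict]
  exact measurePreserving_head_tail.setIntegral_preimage_emb measurableEmbedding_head_tail
    (fun w => g w.1 * f w.2) (s ×ˢ t)

lemma integral_mul_head_tail (g : α → ℝ) (f : (Fin d → α) → ℝ) :
    ∫ y : Fin (d + 1) → α, g (y 0) * f (Fin.tail y) = (∫ u, g u) * ∫ x, f x := by
  simpa using setIntegral_mul_head_tail g f univ univ

end HeadTail

lemma ball_eq_head_tail_mem {α : Type*} [PseudoMetricSpace α] {d : ℕ} (z : Fin (d + 1) → α)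
    {ρ : ℝ} (hρ : 0 < ρ) :
    ball z ρ =
      {y : Fin (d + 1) → α | y 0 ∈ ball (z 0) ρ ∧ Fin.tail y ∈ ball (Fin.tail z) ρ} := by
  ext y
  simp only [mem_ball, mem_ofPred_eq, dist_pi_lt_iff hρ, Fin.forall_fin_succ, Fin.tail]

section Cube

variable {m : ℕ}

lemma unitCube_eq_ball : unitCube m = ball 0 (1 / 2) := by
  rw [ball_pi _ one_half_pos]
  ext y
  simp [unitCube, Real.ball_eq_Ioo]

lemma volume_unitCube : volume (unitCube m) = 1 := by
  norm_num [unitCube, volume_pi_pi, Real.volume_Ioo]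

lemma image_unitCube {r : ℝ} (hr : 0 < r) (x : Fin m → ℝ) :
    (fun b => x + r • b) '' unitCube m = ball x (r / 2) := by
  rw [unitCube_eq_ball, ← image_image (x + ·) (r • ·), image_smul, _root_.smul_ball hr.ne',
    smul_zero, image_add_left, preimage_add_left_ball, Real.norm_of_nonneg hr.le, neg_neg,
    add_zero, mul_one_div]

variable {s : ℤ → ℝ} {f : (Fin m → ℝ) → ℝ}

lemma lacMaxOp_unitCube (hs : ∀ n, 0 < s n) (hf : Integrable f) (x : Fin m → ℝ) :
    lacMaxOp m s (unitCube m) f x =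
      ⨆ n, ENNReal.ofReal ((∫ y in ball x (s n / 2), |f y|) / s n ^ m) := by
  refine iSup_congr fun n => ?_
  rw [image_unitCube (hs n), volume_unitCube, mul_one,
    ← ofReal_integral_eq_lintegral_ofReal hf.abs.integrableOn
      (.of_forall fun _ => abs_nonneg _),
    ENNReal.ofReal_div_of_pos (pow_pos (hs n) m)]

lemma ofReal_lt_lacMaxOp_unitCube_iff (hs : ∀ n, 0 < s n) (hf : Integrable f)
    {α : ℝ} (hα : 0 < α) (x : Fin m → ℝ) :
    ENNReal.ofReal α < lacMaxOp m s (unitCube m) f x ↔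
      ∃ n, α * s n ^ m < ∫ y in ball x (s n / 2), |f y| := by
  simp only [lacMaxOp_unitCube hs hf, lt_iSup_iff, ENNReal.ofReal_lt_ofReal_iff',
    lt_div_iff₀ (pow_pos (hs _) m), zero_mul]
  exact exists_congr fun n => and_iff_left_of_imp (mul_pos hα (pow_pos (hs n) m)).trans

lemma le_max_one_div_of_mul_pow_lt (hm : m ≠ 0) {α r I : ℝ} (hα : 0 < α)
    (h : α * r ^ m < I) : r ≤ max 1 (I / α) := by
  rcases le_or_gt r 1 with hr | hr
  · exact le_max_of_le_left hr
  · refine le_max_of_le_right ?_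
    rw [le_div_iff₀ hα]
    nlinarith [le_self_pow₀ hr.le hm]

lemma exists_scale_of_ofReal_lt_lacMaxOp_unitCube (hm : 1 ≤ m) (hs : ∀ n, 0 < s n)
    (hf : Integrable f) {α : ℝ} (hα : 0 < α) {x : Fin m → ℝ}
    (hx : ENNReal.ofReal α < lacMaxOp m s (unitCube m) f x) :
    ∃ n, s n ≤ max 1 ((∫ y, |f y|) / α) ∧ α * s n ^ m < ∫ y in ball x (s n / 2), |f y| := by
  obtain ⟨n, hn⟩ := (ofReal_lt_lacMaxOp_unitCube_iff hs hf hα x).1 hx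
  refine ⟨n, le_max_one_div_of_mul_pow_lt (by omega) hα (hn.trans_le ?_), hn⟩
  exact setIntegral_le_integral hf.abs (.of_forall fun _ => abs_nonneg _)

end Cube

section Vitali

variable {X : Type*} [PseudoMetricSpace X] [TopologicalSpace.SeparableSpace X]
  [MeasurableSpace X] [OpensMeasurableSpace X]

theorem measure_le_lintegral_of_forall_closedBall_le (μ : Measure X) {S : Set X} {r : X → ℝ}
    {R τ : ℝ} (hr : ∀ x ∈ S, 0 < r x) (hR : ∀ x ∈ S, r x ≤ R) (hτ : 3 < τ) {g : X → ℝ≥0∞}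
    (hg : ∀ x ∈ S, μ (closedBall x (τ * r x)) ≤ ∫⁻ y in ball x (r x), g y ∂μ) :
    μ S ≤ ∫⁻ y, g y ∂μ := by
  obtain ⟨u, huS, hdisj, hcov⟩ :=
    Vitali.exists_disjoint_subfamily_covering_enlargement_closedBall S id r R hR τ hτ
  have hdisj' : u.PairwiseDisjoint fun x => ball x (r x) :=
    hdisj.mono fun _ => ball_subset_closedBall
  have hu : u.Countable := hdisj'.countable_of_isOpen (fun _ _ => isOpen_ball)
    fun x hx => nonempty_ball.2 (hr x (huS hx))
  have hSu : S ⊆ ⋃ x ∈ u, closedBall x (τ * r x) := fun y hy => by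
    obtain ⟨x, hx, hsub⟩ := hcov y hy
    exact mem_biUnion hx (hsub (mem_closedBall_self (hr y hy).le))
  calc μ S ≤ ∑' x : u, μ (closedBall x (τ * r x)) :=
        (measure_mono hSu).trans (measure_biUnion_le μ hu _)
    _ ≤ ∑' x : u, ∫⁻ y in ball x (r x), g y ∂μ :=
        ENNReal.tsum_le_tsum fun x => hg x (huS x.2)
    _ = ∫⁻ y in ⋃ x ∈ u, ball x (r x), g y ∂μ :=
        (lintegral_biUnion hu (fun _ _ => measurableSet_ball) hdisj' _).symm
    _ ≤ ∫⁻ y, g y ∂μ := setLIntegral_le_lintegral _ _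

end Vitali

def IsWeakTypeConst (d : ℕ) (s : ℤ → ℝ) (B : Set (Fin d → ℝ)) (c : ℝ) : Prop :=
  0 < c ∧ ∀ f : (Fin d → ℝ) → ℝ, Integrable f volume → ∀ α : ℝ, 0 < α →
    ENNReal.ofReal α * volume {x | ENNReal.ofReal α < lacMaxOp d s B f x} ≤
      ENNReal.ofReal (c * ∫ x, |f x|)

theorem isWeakTypeConst_four_pow {m : ℕ} (hm : 1 ≤ m) {s : ℤ → ℝ} (hs : ∀ n, 0 < s n) :
    IsWeakTypeConst m s (unitCube m) (4 ^ m) := by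
  refine ⟨by positivity, fun f hf α hα => ?_⟩
  have hg : Integrable fun y => 4 ^ m / α * |f y| := hf.abs.const_mul _
  have hg0 : 0 ≤ᵐ[volume] fun y => 4 ^ m / α * |f y| := .of_forall fun _ => by positivity
  have hball : ∀ x ∈ {x | ENNReal.ofReal α < lacMaxOp m s (unitCube m) f x}, ∃ ρ, 0 < ρ ∧
      ρ ≤ max 1 ((∫ y, |f y|) / α) ∧ volume (closedBall x (4 * ρ)) ≤
        ∫⁻ y in ball x ρ, ENNReal.ofReal (4 ^ m / α * |f y|) := by
    intro x hx
    obtain ⟨n, hn_le, hn⟩ := exists_scale_of_ofReal_lt_lacMaxOp_unitCube hm hs hf hα hx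
    refine ⟨s n / 2, half_pos (hs n), by linarith [hs n], ?_⟩
    rw [Real.volume_pi_closedBall _ (by linarith [hs n]),
      ← ofReal_integral_eq_lintegral_ofReal hg.integrableOn (ae_restrict_of_ae hg0),
      integral_const_mul, Fintype.card_fin]
    refine ENNReal.ofReal_le_ofReal ?_
    calc (2 * (4 * (s n / 2))) ^ m = 4 ^ m / α * (α * s n ^ m) := by
          field_simp
          ring
      _ ≤ 4 ^ m / α * ∫ y in ball x (s n / 2), |f y| := by gcongr
  choose! r hr hrR hvol using hball
  calc ENNReal.ofReal α * volume {x | ENNReal.ofReal α < lacMaxOp m s (unitCube m) f x}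
      ≤ ENNReal.ofReal α * ∫⁻ y, ENNReal.ofReal (4 ^ m / α * |f y|) := by
        gcongr
        exact measure_le_lintegral_of_forall_closedBall_le volume hr hrR (by norm_num) hvol
    _ = ENNReal.ofReal (4 ^ m * ∫ y, |f y|) := by
        rw [← ofReal_integral_eq_lintegral_ofReal hg hg0, integral_const_mul,
          ← ENNReal.ofReal_mul hα.le]
        field_simp

section Slab

noncomputable def slabDensity (L : ℝ) : ℝ → ℝ := (Ioo 0 L).indicator fun _ => L⁻¹

variable {L : ℝ}

lemma slabDensity_nonneg (hL : 0 < L) (t : ℝ) : 0 ≤ slabDensity L t :=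
  indicator_nonneg (fun _ _ => inv_nonneg.2 hL.le) t

lemma integrable_slabDensity : Integrable (slabDensity L) :=
  (integrable_indicator_iff measurableSet_Ioo).2 (integrableOn_const measure_Ioo_lt_top.ne)

lemma integral_slabDensity (hL : 0 < L) : ∫ t, slabDensity L t = 1 := by
  rw [slabDensity, integral_indicator_const _ measurableSet_Ioo,
    Real.volume_real_Ioo_of_le hL.le, smul_eq_mul, sub_zero, mul_inv_cancel₀ hL.ne']

lemma setIntegral_slabDensity_of_subset {S : Set ℝ} (hS : S ⊆ Ioo 0 L) :
    ∫ t in S, slabDensity L t = volume.real S * L⁻¹ := by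
  rw [slabDensity, setIntegral_indicator measurableSet_Ioo, inter_eq_left.2 hS,
    setIntegral_const, smul_eq_mul]

end Slab

section Lift

variable {d : ℕ} {s : ℤ → ℝ} {f : (Fin d → ℝ) → ℝ} {L α : ℝ}

lemma abs_slabDensity_mul (hL : 0 < L) (t : ℝ) (a : ℝ) :
    |slabDensity L t * a| = slabDensity L t * |a| := by
  rw [abs_mul, abs_of_nonneg (slabDensity_nonneg hL t)]

lemma integral_abs_slabDensity_mul_tail (hL : 0 < L) (f : (Fin d → ℝ) → ℝ) :
    ∫ y : Fin (d + 1) → ℝ, |slabDensity L (y 0) * f (Fin.tail y)| = ∫ x, |f x| := by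
  simp_rw [abs_slabDensity_mul hL]
  rw [integral_mul_head_tail (slabDensity L) fun x => |f x|, integral_slabDensity hL, one_mul]

lemma ofReal_div_lt_lacMaxOp_slabDensity_mul_tail (hd : 1 ≤ d) (hs : ∀ n, 0 < s n)
    (hf : Integrable f) (hα : 0 < α) (hL : 0 < L) {y : Fin (d + 1) → ℝ}
    (hy0 : y 0 ∈ Icc (max 1 ((∫ x, |f x|) / α) / 2) (L - max 1 ((∫ x, |f x|) / α) / 2))
    (hy : ENNReal.ofReal α < lacMaxOp d s (unitCube d) f (Fin.tail y)) :
    ENNReal.ofReal (α / L) <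
      lacMaxOp (d + 1) s (unitCube (d + 1))
        (fun y => slabDensity L (y 0) * f (Fin.tail y)) y := by
  obtain ⟨n, hn_le, hn⟩ := exists_scale_of_ofReal_lt_lacMaxOp_unitCube hd hs hf hα hy
  have hρ : 0 < s n / 2 := half_pos (hs n)
  have hball : ball (y 0) (s n / 2) ⊆ Ioo 0 L := by
    rw [Real.ball_eq_Ioo]
    exact Ioo_subset_Ioo (by linarith [hy0.1, hs n]) (by linarith [hy0.2, hs n])
  rw [ofReal_lt_lacMaxOp_unitCube_iff hs (integrable_mul_head_tail integrable_slabDensity hf)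
    (div_pos hα hL)]
  refine ⟨n, ?_⟩
  simp_rw [abs_slabDensity_mul hL]
  rw [ball_eq_head_tail_mem y hρ, setIntegral_mul_head_tail (slabDensity L) fun x => |f x|,
    setIntegral_slabDensity_of_subset hball, Real.volume_real_ball hρ.le]
  calc α / L * s n ^ (d + 1) = 2 * (s n / 2) * L⁻¹ * (α * s n ^ d) := by
        field_simp
        ring
    _ < 2 * (s n / 2) * L⁻¹ * ∫ x in ball (Fin.tail y) (s n / 2), |f x| := by
        gcongr

lemma volume_head_mem_Icc_tail_mem (L R : ℝ) (A : Set (Fin d → ℝ)) :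
    volume {y : Fin (d + 1) → ℝ | y 0 ∈ Icc (R / 2) (L - R / 2) ∧ Fin.tail y ∈ A} =
      ENNReal.ofReal (L - R) * volume A := by
  rw [volume_head_tail_mem, Real.volume_Icc]
  ring_nf

end Lift

theorem IsWeakTypeConst.of_succ {d : ℕ} (hd : 1 ≤ d) {s : ℤ → ℝ} (hs : ∀ n, 0 < s n) {c : ℝ}
    (hc : IsWeakTypeConst (d + 1) s (unitCube (d + 1)) c) :
    IsWeakTypeConst d s (unitCube d) c := by
  refine ⟨hc.1, fun f hf α hα => ?_⟩
  set R := max 1 ((∫ x, |f x|) / α)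
  set A := {x | ENNReal.ofReal α < lacMaxOp d s (unitCube d) f x}
  have hslab : ∀ L > 0,
      ENNReal.ofReal (α / L * (L - R)) * volume A ≤ ENNReal.ofReal (c * ∫ x, |f x|) := by
    intro L hL
    have hF := hc.2 _ (integrable_mul_head_tail (integrable_slabDensity (L := L)) hf) (α / L)
      (div_pos hα hL)
    rw [integral_abs_slabDensity_mul_tail hL] at hF
    refine le_trans ?_ hF
    rw [ENNReal.ofReal_mul (div_nonneg hα.le hL.le), mul_assoc, ← volume_head_mem_Icc_tail_mem]
    gcongr
    exact fun hy => ofReal_div_lt_lacMaxOp_slabDensity_mul_tail hd hs hf hα hL hy.1 hy.2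
  have hlim : Tendsto (fun L => ENNReal.ofReal (α / L * (L - R)) * volume A) atTop
      (𝓝 (ENNReal.ofReal α * volume A)) := by
    refine ENNReal.Tendsto.mul_const (ENNReal.tendsto_ofReal ?_)
      (.inl (ENNReal.ofReal_pos.2 hα).ne')
    have h : Tendsto (fun L => α - α * R / L) atTop (𝓝 (α - 0)) :=
      tendsto_const_nhds.sub (tendsto_const_nhds.div_atTop tendsto_id)
    rw [sub_zero] at h
    refine h.congr' ((eventually_gt_atTop 0).mono fun L hL => ?_)
    field_simp
  exact le_of_tendsto hlim ((eventually_gt_atTop 0).mono hslab)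

theorem lacBestConst_cube_mono_general (s : ℤ → ℝ) (hs_pos : ∀ n, 0 < s n)
    (d : ℕ) (hd : 1 ≤ d) :
    lacBestConst d s (unitCube d) ≤ lacBestConst (d + 1) s (unitCube (d + 1)) :=
  csInf_le_csInf ⟨0, fun _ hc => hc.1.le⟩ ⟨_, isWeakTypeConst_four_pow (by omega) hs_pos⟩
    fun _ hc => IsWeakTypeConst.of_succ hd hs_pos hc

/-- Let `s = {r_n}_{n∈ℤ}` be a lacunary sequence of positive reals
(`r_{n+1}/r_n ≥ c` for some fixed `c > 1` and all `n ∈ ℤ`). With `c_{s,d}` the best constant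
in the weak type `(1,1)` inequality for the lacunary maximal operator associated to the open
unit cube `Q_d = (-1/2,1/2)^d`, one has `c_{s,d} ≤ c_{s,d+1}` for every `d ≥ 1`. -/
theorem lacBestConst_cube_mono (s : ℤ → ℝ) (hs_pos : ∀ n, 0 < s n)
    (hs_lac : ∃ c : ℝ, 1 < c ∧ ∀ n : ℤ, c ≤ s (n + 1) / s n)
    (d : ℕ) (hd : 1 ≤ d) :
    lacBestConst d s (unitCube d) ≤ lacBestConst (d + 1) s (unitCube (d + 1)) :=
  lacBestConst_cube_mono_general s hs_pos d hd
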